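/- arXiv:1908.11095 — 3 statements merged into one kernel-verified Lean document; each statement's English description precedes it below -/
import Mathlib

section
/- For every natural number k, the composition of binary word morphisms φ_α ∘ φ_a^k ∘ φ_β equals φ_β ∘ φ_b^k ∘ φ_α, where φ_a(0)=0, φ_a(1)=10; φ_b(0)=0, φ_b(1)=01; φ_α(0)=01, φ_α(1)=1; φ_β(0)=10, φ_β(1)=1. -/
/-- Elementary Sturmian morphism φ_a: 0↦0, 1↦10 (false = 0, true = 1). -/
def phiA : Bool → List Bool
  | false => [false]
  | true => [true, false]

/-- φ_b: 0↦0, 1↦01. -/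
def phiB : Bool → List Bool
  | false => [false]
  | true => [false, true]

/-- φ_α: 0↦01, 1↦1. -/
def phiAl : Bool → List Bool
  | false => [false, true]
  | true => [true]

/-- φ_β: 0↦10, 1↦1. -/
def phiBe : Bool → List Bool
  | false => [true, false]
  | true => [true]

/-- Apply a morphism (given by its letter images) to a finite word. -/
def apm (f : Bool → List Bool) (w : List Bool) : List Bool := w.flatMap f

lemma apm_append (f : Bool → List Bool) (u v : List Bool) :
    apm f (u ++ v) = apm f u ++ apm f v := by
  simp [apm]

lemma apm_cons (f : Bool → List Bool) (b : Bool) (w : List Bool) :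
    apm f (b :: w) = f b ++ apm f w := by
  simp [apm]

lemma iter_apm_append (f : Bool → List Bool) (k : ℕ) (u v : List Bool) :
    (apm f)^[k] (u ++ v) = (apm f)^[k] u ++ (apm f)^[k] v := by
  induction k with
  | zero => rfl
  | succ n ih =>
      rw [Function.iterate_succ_apply', Function.iterate_succ_apply',
        Function.iterate_succ_apply', ih, apm_append]

lemma iterA_zero (k : ℕ) : (apm phiA)^[k] [false] = [false] := by
  induction k with
  | zero => rfl
  | succ n ih => rw [Function.iterate_succ_apply', ih]; rfl

lemma iterB_zero (k : ℕ) : (apm phiB)^[k] [false] = [false] := by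
  induction k with
  | zero => rfl
  | succ n ih => rw [Function.iterate_succ_apply', ih]; rfl

lemma apm_replicate (f : Bool → List Bool) (hf : f false = [false]) (n : ℕ) :
    apm f (List.replicate n false) = List.replicate n false := by
  induction n with
  | zero => rfl
  | succ m ihm => rw [List.replicate_succ, apm_cons, ihm, hf]; rfl

lemma iterA_one (k : ℕ) :
    (apm phiA)^[k] [true] = true :: List.replicate k false := by
  induction k with
  | zero => rfl
  | succ n ih =>
      rw [Function.iterate_succ_apply', ih]
      show apm phiA ([true] ++ List.replicate n false) = _
      rw [apm_append, apm_replicate phiA rfl]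
      simp [apm, phiA, List.replicate_succ]

lemma iterB_one (k : ℕ) :
    (apm phiB)^[k] [true] = List.replicate k false ++ [true] := by
  induction k with
  | zero => rfl
  | succ n ih =>
      rw [Function.iterate_succ_apply', ih, apm_append, apm_replicate phiB rfl]
      rw [show apm phiB [true] = [false] ++ [true] from rfl, ← List.append_assoc,
        ← List.replicate_succ']

lemma key (n : ℕ) :
    apm phiAl (true :: List.replicate n false) =
      apm phiBe (List.replicate n false ++ [true]) := by
  induction n with
  | zero => rfl
  | succ m ih =>
      rw [List.replicate_succ]
      have h1 : apm phiAl (true :: false :: List.replicate m false) =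
          [true, false] ++ apm phiAl (true :: List.replicate m false) := by
        simp [apm, phiAl]
      have h2 : apm phiBe ((false :: List.replicate m false) ++ [true]) =
          [true, false] ++ apm phiBe (List.replicate m false ++ [true]) := by
        simp [apm, phiBe]
      rw [h1, h2, ih]

lemma letter_case (k : ℕ) (b : Bool) :
    apm phiAl ((apm phiA)^[k] (phiBe b)) = apm phiBe ((apm phiB)^[k] (phiAl b)) := by
  cases b with
  | true =>
      show apm phiAl ((apm phiA)^[k] [true]) = apm phiBe ((apm phiB)^[k] [true])
      rw [iterA_one, iterB_one, key]
  | false =>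
      show apm phiAl ((apm phiA)^[k] [true, false]) =
        apm phiBe ((apm phiB)^[k] [false, true])
      have hA : ([true, false] : List Bool) = [true] ++ [false] := rfl
      have hB : ([false, true] : List Bool) = [false] ++ [true] := rfl
      rw [hA, hB, iter_apm_append, iter_apm_append, iterA_one, iterA_zero,
        iterB_one, iterB_zero]
      have hl : (true :: List.replicate k false) ++ [false] =
          true :: List.replicate (k + 1) false := by
        simp [List.replicate_succ']
      have hr : ([false] ++ (List.replicate k false ++ [true])) =
          List.replicate (k + 1) false ++ [true] := by
        simp [List.replicate_succ]
      rw [hl, hr, key]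

theorem phi_alpha_ak_beta_eq_phi_beta_bk_alpha (k : ℕ) (w : List Bool) :
    apm phiAl ((apm phiA)^[k] (apm phiBe w)) = apm phiBe ((apm phiB)^[k] (apm phiAl w)) := by
  induction w with
  | nil =>
      have h1 : apm phiBe [] = [] := rfl
      have h2 : apm phiAl [] = [] := rfl
      rw [h1, h2]
      have : ∀ f : Bool → List Bool, (apm f)^[k] [] = [] := by
        intro f
        induction k with
        | zero => rfl
        | succ n ih => rw [Function.iterate_succ_apply', ih]; rfl
      rw [this, this]
      rfl
  | cons b t ih =>
      rw [apm_cons, apm_cons, iter_apm_append, iter_apm_append,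
        apm_append, apm_append, ih, letter_case]
end

section
/- For every natural number k, the composition of binary word morphisms φ_a ∘ φ_α^k ∘ φ_b equals φ_b ∘ φ_β^k ∘ φ_a. -/
/-! Both sides are morphisms, so it suffices to compare them on letters, and there everything
reduces to the words `φ_α^n(0) = 0 1^n` and `φ_β^n(0) = 1^n 0`, whose images `0 (10)^n` and
`(01)^n 0` coincide. The letter `1` needs no separate argument, because `φ_b(1) = φ_α(0)` and
`φ_a(1) = φ_β(0)`. -/

open List

lemma apm_apm (f g : Bool → List Bool) (w : List Bool) :
    apm f (apm g w) = apm (fun c => apm f (g c)) w :=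
  flatMap_assoc

lemma iterate_apm_apm (f g : Bool → List Bool) (k : ℕ) (w : List Bool) :
    (apm f)^[k] (apm g w) = apm (fun c => (apm f)^[k] (g c)) w := by
  induction k generalizing g with
  | zero => rfl
  | succ k ih => rw [Function.iterate_succ_apply, apm_apm, ih]; rfl

lemma cons_flatten_replicate_pair {α : Type*} (a b : α) (n : ℕ) :
    a :: (replicate n [b, a]).flatten = (replicate n [a, b]).flatten ++ [a] := by
  induction n with
  | zero => rfl
  | succ n ih => simp [replicate_succ, ih]

lemma iterate_apm_phiAl_false (n : ℕ) :
    (apm phiAl)^[n] [false] = false :: replicate n true := by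
  induction n with
  | zero => rfl
  | succ n ih =>
    rw [Function.iterate_succ_apply', ih]
    simp [apm, phiAl, flatMap_replicate, replicate_succ]

lemma iterate_apm_phiBe_false (n : ℕ) :
    (apm phiBe)^[n] [false] = replicate n true ++ [false] := by
  induction n with
  | zero => rfl
  | succ n ih =>
    rw [Function.iterate_succ_apply', ih]
    simp [apm, phiBe, flatMap_replicate, replicate_succ']

lemma apm_phiA_iterate_phiAl_false_eq_apm_phiB_iterate_phiBe_false (n : ℕ) :
    apm phiA ((apm phiAl)^[n] [false]) = apm phiB ((apm phiBe)^[n] [false]) := by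
  rw [iterate_apm_phiAl_false, iterate_apm_phiBe_false]
  simpa [apm, phiA, phiB, flatMap_replicate] using cons_flatten_replicate_pair false true n

theorem phi_a_alphak_b_eq_phi_b_betak_a (k : ℕ) (w : List Bool) :
    apm phiA ((apm phiAl)^[k] (apm phiB w)) = apm phiB ((apm phiBe)^[k] (apm phiA w)) := by
  rw [iterate_apm_apm, iterate_apm_apm, apm_apm, apm_apm]
  congr 1
  funext c
  cases c with
  | false => exact apm_phiA_iterate_phiAl_false_eq_apm_phiB_iterate_phiBe_false k
  | true => exact apm_phiA_iterate_phiAl_false_eq_apm_phiB_iterate_phiBe_false (k + 1)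
end

section
/- Let u be an aperiodic uniformly recurrent infinite word and w a factor of u. Then there exists a word s such that w·s is a right special factor of u, w·s' is not right special for any proper prefix s' of s, and the set of return words of w in u equals the set of return words of w·s in u; consequently the derived words d_u(w) and d_u(ws) coincide. -/
/-- The word `w` occurs in the infinite word `u` at position `i`. -/
def FactorAt {A : Type*} (u : ℕ → A) (w : List A) (i : ℕ) : Prop :=
  w = (List.range w.length).map fun j => u (i + j)

/-- `w` is a factor of the infinite word `u`. -/
def IsFactor {A : Type*} (u : ℕ → A) (w : List A) : Prop :=
  ∃ i, FactorAt u w i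

/-- `u` is uniformly recurrent: every factor occurs in every window of some
fixed length (hence infinitely often with bounded gaps). -/
def UniformlyRecurrent {A : Type*} (u : ℕ → A) : Prop :=
  ∀ w, IsFactor u w → ∃ R, ∀ i, ∃ j, i ≤ j ∧ j < i + R ∧ FactorAt u w j

/-- `u` is aperiodic: not eventually periodic. -/
def Aperiodic {A : Type*} (u : ℕ → A) : Prop :=
  ¬ ∃ N p, 0 < p ∧ ∀ n, N ≤ n → u (n + p) = u n

/-- `r` is a return word of `w` in `u`: at some occurrence, `r w` is a factor of
`u` in which `w` occurs exactly twice, as a prefix and as a suffix. -/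
def ReturnWord {A : Type*} (u : ℕ → A) (w r : List A) : Prop :=
  r ≠ [] ∧ ∃ i, FactorAt u r i ∧ FactorAt u w i ∧ FactorAt u w (i + r.length) ∧
    ∀ j, i < j → j < i + r.length → ¬ FactorAt u w j

/-- `v` is a right special factor of `u`. -/
def RightSpecial {A : Type*} (u : ℕ → A) (v : List A) : Prop :=
  ∃ a b : A, a ≠ b ∧ IsFactor u (v ++ [a]) ∧ IsFactor u (v ++ [b])

/-- `v` is a left special factor of `u`. -/
def LeftSpecial {A : Type*} (u : ℕ → A) (v : List A) : Prop :=
  ∃ a b : A, a ≠ b ∧ IsFactor u (a :: v) ∧ IsFactor u (b :: v)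


/-!
Fix an occurrence of `w` at position `i₀` and extend `w` letter by letter along `u` from there,
to `w ++ factor u (i₀ + w.length) n`.
As long as the current extension `v` is not right special, every occurrence of `v` is followed by
the same letter, so the occurrences of `w` and of its extensions coincide. If this went on forever,
every occurrence of `w` would be followed by the same infinite word; two distinct occurrences,
which uniform recurrence provides, would then make `u` eventually periodic.
-/

namespace InfiniteWord

variable {A : Type*} {u : ℕ → A}

def factor (u : ℕ → A) (i m : ℕ) : List A :=
  (List.range m).map fun k => u (i + k)

@[simp]
lemma length_factor (i m : ℕ) : (factor u i m).length = m := by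
  simp [factor]

lemma factor_add (i m n : ℕ) : factor u i (m + n) = factor u i m ++ factor u (i + m) n := by
  simp [factor, List.range_add, Nat.add_assoc]

lemma factor_one (i : ℕ) : factor u i 1 = [u i] := by
  simp [factor]

lemma factorAt_iff_eq_factor {w : List A} {i : ℕ} : FactorAt u w i ↔ w = factor u i w.length :=
  Iff.rfl

lemma factorAt_factor (i m : ℕ) : FactorAt u (factor u i m) i := by
  rw [factorAt_iff_eq_factor, length_factor]

lemma factorAt_append {w v : List A} {i : ℕ} :
    FactorAt u (w ++ v) i ↔ FactorAt u w i ∧ FactorAt u v (i + w.length) := by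
  simp only [factorAt_iff_eq_factor, List.length_append, factor_add]
  constructor
  · intro h
    exact List.append_inj h (length_factor _ _).symm
  · rintro ⟨hw, hv⟩
    rw [← hw, ← hv]

lemma factorAt_singleton {a : A} {i : ℕ} : FactorAt u [a] i ↔ a = u i := by
  simp [factorAt_iff_eq_factor, factor]

lemma _root_.FactorAt.of_prefix {w v : List A} {i : ℕ} (hvw : v <+: w) (hw : FactorAt u w i) :
    FactorAt u v i := by
  obtain ⟨t, rfl⟩ := hvw
  exact (factorAt_append.1 hw).1

lemma returnWord_congr {w w' : List A} (h : ∀ i, FactorAt u w i ↔ FactorAt u w' i)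
    (r : List A) :
    ReturnWord u w r ↔ ReturnWord u w' r := by
  simp only [ReturnWord, h]

lemma _root_.UniformlyRecurrent.exists_factorAt_gt (hur : UniformlyRecurrent u) {w : List A}
    (hw : IsFactor u w) (i : ℕ) : ∃ j, i < j ∧ FactorAt u w j := by
  obtain ⟨R, hR⟩ := hur w hw
  obtain ⟨j, hij, -, hj⟩ := hR (i + 1)
  exact ⟨j, hij, hj⟩

lemma _root_.Aperiodic.exists_factor_ne (hap : Aperiodic u) {i j : ℕ} (hij : i < j) :
    ∃ n, factor u i n ≠ factor u j n := by
  by_contra! h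
  have hshift : ∀ k, u (i + k) = u (j + k) := fun k => by
    have hk := h (k + 1)
    rw [factor_add, factor_add, factor_one, factor_one] at hk
    exact List.singleton_inj.1 (List.append_inj' hk rfl).2
  refine hap ⟨i, j - i, by omega, fun n hn => ?_⟩
  have := hshift (n - i)
  rwa [show i + (n - i) = n by omega, show j + (n - i) = n + (j - i) by omega, eq_comm] at this

lemma letter_eq_of_not_rightSpecial {v : List A} (hv : ¬ RightSpecial u v) {i j : ℕ}
    (hi : FactorAt u v i) (hj : FactorAt u v j) : u (i + v.length) = u (j + v.length) := by
  by_contra hne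
  exact hv ⟨_, _, hne, ⟨i, factorAt_append.2 ⟨hi, factorAt_singleton.2 rfl⟩⟩,
    ⟨j, factorAt_append.2 ⟨hj, factorAt_singleton.2 rfl⟩⟩⟩

lemma _root_.FactorAt.append_factor_of_not_rightSpecial {w : List A} {i i₀ n : ℕ}
    (hi : FactorAt u w i) (hi₀ : FactorAt u w i₀)
    (hn : ∀ k < n, ¬ RightSpecial u (w ++ factor u (i₀ + w.length) k)) :
    FactorAt u (w ++ factor u (i₀ + w.length) n) i := by
  induction n with
  | zero => simpa [factor] using hi
  | succ n ih =>
    have hext := ih fun k hk => hn k (by omega)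
    have hext₀ : FactorAt u (w ++ factor u (i₀ + w.length) n) i₀ :=
      factorAt_append.2 ⟨hi₀, factorAt_factor _ _⟩
    have hletter := letter_eq_of_not_rightSpecial (hn n n.lt_succ_self) hext hext₀
    rw [factor_add, factor_one, ← List.append_assoc]
    refine factorAt_append.2 ⟨hext, factorAt_singleton.2 ?_⟩
    simpa [Nat.add_assoc] using hletter.symm

lemma exists_rightSpecial_append_factor (hap : Aperiodic u) (hur : UniformlyRecurrent u)
    {w : List A} {i₀ : ℕ} (hi₀ : FactorAt u w i₀) :
    ∃ n, RightSpecial u (w ++ factor u (i₀ + w.length) n) := by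
  obtain ⟨j, hi₀j, hj⟩ := hur.exists_factorAt_gt ⟨i₀, hi₀⟩ i₀
  obtain ⟨n, hn⟩ := hap.exists_factor_ne (show i₀ + w.length < j + w.length by omega)
  by_contra! h
  have hext := hj.append_factor_of_not_rightSpecial (n := n) hi₀ fun k _ => h k
  exact hn (by simpa [factorAt_iff_eq_factor] using (factorAt_append.1 hext).2)

end InfiniteWord

open InfiniteWord in
theorem right_special_extension_general {A : Type*} (u : ℕ → A)
    (hap : Aperiodic u) (hur : UniformlyRecurrent u)
    (w : List A) (hw : IsFactor u w) :
    ∃ s : List A, RightSpecial u (w ++ s) ∧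
      (∀ s', s' <+: s → s' ≠ s → ¬ RightSpecial u (w ++ s')) ∧
      (∀ r, ReturnWord u w r ↔ ReturnWord u (w ++ s) r) ∧
      (∀ i, FactorAt u w i ↔ FactorAt u (w ++ s) i) := by
  classical
  obtain ⟨i₀, hi₀⟩ := hw
  have hex := exists_rightSpecial_append_factor hap hur hi₀
  set s := factor u (i₀ + w.length) (Nat.find hex)
  have hocc : ∀ i, FactorAt u w i ↔ FactorAt u (w ++ s) i := fun i =>
    ⟨fun hi => hi.append_factor_of_not_rightSpecial hi₀ fun _ => Nat.find_min hex,
      fun hi => (factorAt_append.1 hi).1⟩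
  refine ⟨s, Nat.find_spec hex, fun s' hs' hne => ?_, returnWord_congr hocc, hocc⟩
  have hlen : s'.length < Nat.find hex :=
    (hs'.length_le.trans_eq (length_factor _ _)).lt_of_ne
      fun h => hne (hs'.eq_of_length (by rw [h, length_factor]))
  rw [factorAt_iff_eq_factor.1 ((factorAt_factor _ _).of_prefix hs')]
  exact Nat.find_min hex hlen

/-- For any factor `w` of an aperiodic uniformly recurrent word `u` there is a
word `s` such that `ws` is right special, `ws'` is not right special for any
proper prefix `s'` of `s`, the return words of `w` and of `ws` coincide, and
the occurrences of `w` and of `ws` coincide (hence the derived words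
`d_u(w)` and `d_u(ws)` coincide). -/
theorem right_special_extension {A : Type*} [Fintype A] (u : ℕ → A)
    (hap : Aperiodic u) (hur : UniformlyRecurrent u)
    (w : List A) (hw : IsFactor u w) :
    ∃ s : List A, RightSpecial u (w ++ s) ∧
      (∀ s', s' <+: s → s' ≠ s → ¬ RightSpecial u (w ++ s')) ∧
      (∀ r, ReturnWord u w r ↔ ReturnWord u (w ++ s) r) ∧
      (∀ i, FactorAt u w i ↔ FactorAt u (w ++ s) i) :=
  right_special_extension_general u hap hur w hw
end
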